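/- arXiv:2411.07241 — 2 statements merged into one kernel-verified Lean document; each statement's English description precedes it below -/
import Mathlib

section
/- Kirchberger-type reduction: let A, B be finite sets of points in ℝ^k. If conv(A) ∩ conv(B) ≠ ∅, then there exist subsets A′ ⊆ A, B′ ⊆ B with |A′| + |B′| ≤ k + 2 and conv(A′) ∩ conv(B′) ≠ ∅. -/
open Set

lemma kirchberger_reduction_aux {E : Type*} [NormedAddCommGroup E] [NormedSpace ℝ E]
    [FiniteDimensional ℝ E] (A B : Finset E)
    (h : (convexHull ℝ (A : Set E) ∩ convexHull ℝ (B : Set E)).Nonempty) :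
    ∃ A' ⊆ A, ∃ B' ⊆ B, A'.card + B'.card ≤ Module.finrank ℝ E + 2 ∧
      (convexHull ℝ (A' : Set E) ∩ convexHull ℝ (B' : Set E)).Nonempty := by
  classical
  obtain ⟨x, hxA, hxB⟩ := h
  -- Lift to E × ℝ
  let f : E →ᵃ[ℝ] (E × ℝ) := AffineMap.mk' (fun a => (a, 1)) (LinearMap.inl ℝ E ℝ) 0
    (by intro p; simp [Prod.ext_iff])
  let g : E →ᵃ[ℝ] (E × ℝ) := AffineMap.mk' (fun b => (-b, -1)) (-(LinearMap.inl ℝ E ℝ)) 0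
    (by intro p; simp [Prod.ext_iff])
  have hf : ∀ a : E, f a = (a, 1) := fun a => rfl
  have hg : ∀ b : E, g b = (-b, -1) := fun b => rfl
  have hfx : (x, (1:ℝ)) ∈ convexHull ℝ (f '' (A : Set E)) := by
    rw [← AffineMap.image_convexHull]
    exact ⟨x, hxA, rfl⟩
  have hgx : (-x, (-1:ℝ)) ∈ convexHull ℝ (g '' (B : Set E)) := by
    rw [← AffineMap.image_convexHull]
    exact ⟨x, hxB, rfl⟩
  have h0 : (0 : E × ℝ) ∈ convexHull ℝ (f '' (A : Set E) ∪ g '' (B : Set E)) := by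
    have h1 := convexHull_mono (subset_union_left (s := f '' (A : Set E))
      (t := g '' (B : Set E))) hfx
    have h2 := convexHull_mono (subset_union_right (s := f '' (A : Set E))
      (t := g '' (B : Set E))) hgx
    have := (convex_convexHull ℝ (f '' (A : Set E) ∪ g '' (B : Set E))) h1 h2
      (by norm_num : (0:ℝ) ≤ 1/2) (by norm_num : (0:ℝ) ≤ 1/2) (by norm_num)
    convert this using 1
    ext <;> simp
  -- Carathéodory
  rw [convexHull_eq_union] at h0
  simp only [Set.mem_iUnion] at h0
  obtain ⟨t, hts, hai, h0t⟩ := h0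
  -- card bound for t
  have htcard : t.card ≤ Module.finrank ℝ E + 2 := by
    have h1 := hai.card_le_finrank_succ
    have h2 : Module.finrank ℝ (vectorSpan ℝ (Set.range ((↑) : t → E × ℝ))) ≤
        Module.finrank ℝ (E × ℝ) := Submodule.finrank_le _
    have h3 : Module.finrank ℝ (E × ℝ) = Module.finrank ℝ E + 1 := by
      rw [Module.finrank_prod, Module.finrank_self]
    rw [Fintype.card_coe] at h1
    omega
  -- define A', B'
  set A' : Finset E := A.filter (fun a => (a, (1:ℝ)) ∈ t) with hA'
  set B' : Finset E := B.filter (fun b => (-b, (-1:ℝ)) ∈ t) with hB'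
  have hA'A : A' ⊆ A := Finset.filter_subset _ _
  have hB'B : B' ⊆ B := Finset.filter_subset _ _
  -- t ⊆ f '' A' ∪ g '' B'
  have htsub : (t : Set (E × ℝ)) ⊆ f '' (A' : Set E) ∪ g '' (B' : Set E) := by
    intro y hy
    rcases hts hy with ⟨a, ha, rfl⟩ | ⟨b, hb, rfl⟩
    · refine Or.inl ⟨a, ?_, rfl⟩
      have : (a, (1:ℝ)) ∈ t := hy
      exact Finset.mem_coe.2 (Finset.mem_filter.2 ⟨ha, this⟩)
    · refine Or.inr ⟨b, ?_, rfl⟩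
      have : (-b, (-1:ℝ)) ∈ t := hy
      exact Finset.mem_coe.2 (Finset.mem_filter.2 ⟨hb, this⟩)
  -- card A' + card B' ≤ card t
  have hcard : A'.card + B'.card ≤ t.card := by
    have hfinj : Function.Injective (fun a : E => ((a, (1:ℝ)) : E × ℝ)) := by
      intro a b hab; exact (Prod.ext_iff.1 hab).1
    have hginj : Function.Injective (fun b : E => ((-b, (-1:ℝ)) : E × ℝ)) := by
      intro a b hab; have := (Prod.ext_iff.1 hab).1; simpa using this
    have hsub : A'.image (fun a : E => ((a, (1:ℝ)) : E × ℝ)) ∪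
        B'.image (fun b : E => ((-b, (-1:ℝ)) : E × ℝ)) ⊆ t := by
      intro y hy
      rcases Finset.mem_union.1 hy with hy | hy
      · obtain ⟨a, ha, rfl⟩ := Finset.mem_image.1 hy
        exact (Finset.mem_filter.1 ha).2
      · obtain ⟨b, hb, rfl⟩ := Finset.mem_image.1 hy
        exact (Finset.mem_filter.1 hb).2
    have hdisj : Disjoint (A'.image (fun a : E => ((a, (1:ℝ)) : E × ℝ)))
        (B'.image (fun b : E => ((-b, (-1:ℝ)) : E × ℝ))) := by
      rw [Finset.disjoint_left]
      rintro y hy1 hy2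
      obtain ⟨a, _, rfl⟩ := Finset.mem_image.1 hy1
      obtain ⟨b, _, hab⟩ := Finset.mem_image.1 hy2
      have := (Prod.ext_iff.1 hab).2
      norm_num at this
    calc A'.card + B'.card
        = (A'.image (fun a : E => ((a, (1:ℝ)) : E × ℝ))).card +
          (B'.image (fun b : E => ((-b, (-1:ℝ)) : E × ℝ))).card := by
          rw [Finset.card_image_of_injective _ hfinj, Finset.card_image_of_injective _ hginj]
      _ = (A'.image (fun a : E => ((a, (1:ℝ)) : E × ℝ)) ∪
          B'.image (fun b : E => ((-b, (-1:ℝ)) : E × ℝ))).card :=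
          (Finset.card_union_of_disjoint hdisj).symm
      _ ≤ t.card := Finset.card_le_card hsub
  -- 0 in convexHull of lifted A' ∪ B'
  have h0' : (0 : E × ℝ) ∈ convexHull ℝ (f '' (A' : Set E) ∪ g '' (B' : Set E)) :=
    convexHull_mono htsub h0t
  -- second-coordinate argument
  have hsndhull : ∀ (s : Set (E × ℝ)) (c : ℝ), (∀ y ∈ s, y.2 = c) →
      ∀ z ∈ convexHull ℝ s, z.2 = c := by
    intro s c hs z hz
    have hconv : Convex ℝ {z : E × ℝ | z.2 = c} := by
      intro p hp q hq a b ha hb hab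
      simp only [Set.mem_setOf_eq] at *
      simp only [Prod.snd_add, Prod.smul_snd, smul_eq_mul, hp, hq]
      rw [← add_mul, hab, one_mul]
    exact convexHull_min (fun y hy => hs y hy) hconv hz
  have hA'ne : (f '' (A' : Set E)).Nonempty := by
    rcases Set.eq_empty_or_nonempty (f '' (A' : Set E)) with he | hne
    · exfalso
      rw [he, Set.empty_union] at h0'
      have := hsndhull (g '' (B' : Set E)) (-1)
        (by rintro y ⟨b, _, rfl⟩; rfl) 0 h0'
      norm_num at this
    · exact hne
  have hB'ne : (g '' (B' : Set E)).Nonempty := by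
    rcases Set.eq_empty_or_nonempty (g '' (B' : Set E)) with he | hne
    · exfalso
      rw [he, Set.union_empty] at h0'
      have := hsndhull (f '' (A' : Set E)) 1
        (by rintro y ⟨a, _, rfl⟩; rfl) 0 h0'
      norm_num at this
    · exact hne
  -- decompose
  rw [convexHull_union hA'ne hB'ne, mem_convexJoin] at h0'
  obtain ⟨p, hp, q, hq, hseg⟩ := h0'
  rw [← AffineMap.image_convexHull] at hp hq
  obtain ⟨p', hp', rfl⟩ := hp
  obtain ⟨q', hq', rfl⟩ := hq
  obtain ⟨a, b, ha, hb, hab, hcomb⟩ := hseg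
  rw [hf p', hg q'] at hcomb
  have hsnd : a * 1 + b * (-1) = 0 := congrArg Prod.snd hcomb
  have hfst : a • p' + b • (-q') = 0 := congrArg Prod.fst hcomb
  have hao : a = 1/2 := by linarith
  have hbo : b = 1/2 := by linarith
  have hpq : p' = q' := by
    rw [hao, hbo] at hfst
    have heq : (1/2:ℝ) • p' = (1/2:ℝ) • q' := by
      rwa [smul_neg, add_neg_eq_zero] at hfst
    exact smul_right_injective E (by norm_num : (1/2:ℝ) ≠ 0) heq
  exact ⟨A', hA'A, B', hB'B, hcard.trans htcard, ⟨p', hp', hpq ▸ hq'⟩⟩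

theorem kirchberger_reduction (k : ℕ) (A B : Finset (EuclideanSpace ℝ (Fin k)))
    (h : (convexHull ℝ (A : Set (EuclideanSpace ℝ (Fin k))) ∩
          convexHull ℝ (B : Set (EuclideanSpace ℝ (Fin k)))).Nonempty) :
    ∃ A' ⊆ A, ∃ B' ⊆ B, A'.card + B'.card ≤ k + 2 ∧
      (convexHull ℝ (A' : Set (EuclideanSpace ℝ (Fin k))) ∩
       convexHull ℝ (B' : Set (EuclideanSpace ℝ (Fin k)))).Nonempty := by
  have := kirchberger_reduction_aux A B h
  simpa [finrank_euclideanSpace_fin] using this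
end

section
/- Let F be a finite family of convex sets in ℝ^d and P ⊆ ℝ^k a finite set, and suppose φ : F → P witnesses that F separates consistently with P (i.e., for all subfamilies F₁, F₂ with |F₁| + |F₂| ≤ k+2, disjointness of conv(∪F₁) and conv(∪F₂) implies disjointness of conv(φ(F₁)) and conv(φ(F₂))). Then the same implication holds for all pairs of subfamilies F₁, F₂ without any cardinality restriction. -/
open Finset

private lemma kirchberger_aux {E : Type*} [NormedAddCommGroup E] [NormedSpace ℝ E]
    [FiniteDimensional ℝ E] (A B : Finset E) {x : E}
    (hA : x ∈ convexHull ℝ (A : Set E)) (hB : x ∈ convexHull ℝ (B : Set E)) :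
    ∃ A' B' : Finset E, A' ⊆ A ∧ B' ⊆ B ∧
      A'.card + B'.card ≤ Module.finrank ℝ E + 2 ∧
      (convexHull ℝ (A' : Set E) ∩ convexHull ℝ (B' : Set E)).Nonempty := by
  classical
  let f : E →ᵃ[ℝ] E × ℝ :=
    ⟨fun a => (a, 1), LinearMap.prod LinearMap.id 0, by
      intro p v; simp [Prod.ext_iff]⟩
  let g : E →ᵃ[ℝ] E × ℝ :=
    ⟨fun a => (-a, -1), LinearMap.prod (-LinearMap.id) 0, by
      intro p v; simp [Prod.ext_iff]; abel⟩
  set S : Set (E × ℝ) := f '' ↑A ∪ g '' ↑B with hS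
  have h1 : ((x, 1) : E × ℝ) ∈ convexHull ℝ S := by
    apply convexHull_mono Set.subset_union_left
    rw [← AffineMap.image_convexHull]
    exact Set.mem_image_of_mem f hA
  have h2 : ((-x, -1) : E × ℝ) ∈ convexHull ℝ S := by
    apply convexHull_mono Set.subset_union_right
    rw [← AffineMap.image_convexHull]
    exact Set.mem_image_of_mem g hB
  have h0 : (0 : E × ℝ) ∈ convexHull ℝ S := by
    have := (convex_convexHull ℝ S) h1 h2 (by norm_num : (0:ℝ) ≤ 1/2)
      (by norm_num : (0:ℝ) ≤ 1/2) (by norm_num)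
    convert this using 1
    ext <;> simp
  rw [convexHull_eq_union] at h0
  simp only [Set.mem_iUnion, exists_prop] at h0
  obtain ⟨t, htS, hai, h0t⟩ := h0
  have hcard : t.card ≤ Module.finrank ℝ E + 2 := by
    have h := hai.card_le_finrank_succ
    rw [Fintype.card_coe] at h
    have h2 : Module.finrank ℝ (vectorSpan ℝ (Set.range ((↑) : t → E × ℝ))) ≤
        Module.finrank ℝ (E × ℝ) := Submodule.finrank_le _
    have h3 : Module.finrank ℝ (E × ℝ) = Module.finrank ℝ E + 1 := by
      rw [Module.finrank_prod, Module.finrank_self]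
    omega
  set A' : Finset E := A.filter (fun a => ((a, 1) : E × ℝ) ∈ t) with hA'
  set B' : Finset E := B.filter (fun b => ((-b, -1) : E × ℝ) ∈ t) with hB'
  have hfinj : ∀ a ∈ A', ∀ b ∈ A', ((a,1) : E × ℝ) = (b,1) → a = b := by
    intro a _ b _ h
    simpa [Prod.ext_iff] using h
  have hginj : ∀ a ∈ B', ∀ b ∈ B', ((-a,-1) : E × ℝ) = (-b,-1) → a = b := by
    intro a _ b _ h
    simpa [Prod.ext_iff] using h
  have ht : t = A'.image (fun a => ((a, 1) : E × ℝ)) ∪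
      B'.image (fun b => ((-b, -1) : E × ℝ)) := by
    ext p
    constructor
    · intro hp
      rcases htS hp with ⟨a, ha, rfl⟩ | ⟨b, hb, rfl⟩
      · exact mem_union_left _ (mem_image.2 ⟨a, mem_filter.2 ⟨mem_coe.1 ha, hp⟩, rfl⟩)
      · exact mem_union_right _ (mem_image.2 ⟨b, mem_filter.2 ⟨mem_coe.1 hb, hp⟩, rfl⟩)
    · intro hp
      rcases mem_union.1 hp with hp | hp
      · obtain ⟨a, ha, rfl⟩ := mem_image.1 hp
        exact (mem_filter.1 ha).2
      · obtain ⟨b, hb, rfl⟩ := mem_image.1 hp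
        exact (mem_filter.1 hb).2
  have hdisjim : Disjoint (A'.image (fun a => ((a, 1) : E × ℝ)))
      (B'.image (fun b => ((-b, -1) : E × ℝ))) := by
    rw [disjoint_left]
    rintro p hp hq
    obtain ⟨a, _, rfl⟩ := mem_image.1 hp
    obtain ⟨b, _, hb⟩ := mem_image.1 hq
    have := congrArg Prod.snd hb
    norm_num at this
  have hcard' : A'.card + B'.card ≤ Module.finrank ℝ E + 2 := by
    rw [← card_image_of_injOn hfinj, ← card_image_of_injOn hginj,
      ← card_union_of_disjoint hdisjim, ← ht]
    exact hcard
  rw [Finset.convexHull_eq] at h0t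
  obtain ⟨w, hw0, hw1, hwc⟩ := h0t
  rw [t.centerMass_eq_of_sum_1 _ hw1] at hwc
  simp only [id_eq] at hwc
  rw [ht, Finset.sum_union hdisjim, Finset.sum_image hfinj, Finset.sum_image hginj] at hwc
  rw [ht, Finset.sum_union hdisjim, Finset.sum_image hfinj, Finset.sum_image hginj] at hw1
  have hsum2 : ∑ a ∈ A', w (a, 1) - ∑ b ∈ B', w (-b, -1) = 0 := by
    have h := congrArg Prod.snd hwc
    simp only [Prod.snd_sum, Prod.snd_add, Prod.smul_mk, smul_eq_mul, mul_one,
      Prod.snd_zero, mul_neg_one, Finset.sum_neg_distrib] at h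
    linarith [h]
  have hsA : ∑ a ∈ A', w (a, 1) = 1/2 := by linarith [hw1, hsum2]
  have hsB : ∑ b ∈ B', w (-b, -1) = 1/2 := by linarith [hw1, hsum2]
  have hsum1 : ∑ a ∈ A', w (a, 1) • a = ∑ b ∈ B', w (-b, -1) • b := by
    have h := congrArg Prod.fst hwc
    simp only [Prod.fst_sum, Prod.fst_add, Prod.smul_mk, Prod.fst_zero, smul_neg,
      Finset.sum_neg_distrib] at h
    exact sub_eq_zero.1 (by rw [sub_eq_add_neg]; exact h)
  refine ⟨A', B', filter_subset _ _, filter_subset _ _, hcard', ?_⟩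
  refine ⟨A'.centerMass (fun a => w (a, 1)) id, ?_, ?_⟩
  · apply Finset.centerMass_mem_convexHull
    · intro a ha
      exact hw0 _ ((mem_filter.1 ha).2)
    · rw [hsA]; norm_num
    · intro a ha; exact mem_coe.2 ha
  · have heq : A'.centerMass (fun a => w (a, 1)) id
        = B'.centerMass (fun b => w (-b, -1)) id := by
      rw [Finset.centerMass, Finset.centerMass, hsA, hsB]
      simp only [id_eq]
      rw [hsum1]
    rw [heq]
    apply Finset.centerMass_mem_convexHull
    · intro b hb
      exact hw0 _ ((mem_filter.1 hb).2)
    · rw [hsB]; norm_num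
    · intro b hb; exact mem_coe.2 hb

/-- The cardinality restriction in the definition of separating consistently
can be removed. -/
theorem separates_consistently_no_card_bound {ι : Type*} [Fintype ι] (d k : ℕ)
    (F : ι → Set (EuclideanSpace ℝ (Fin d)))
    (hconv : ∀ i, Convex ℝ (F i)) (hcomp : ∀ i, IsCompact (F i))
    (P : Finset (EuclideanSpace ℝ (Fin k)))
    (φ : ι → EuclideanSpace ℝ (Fin k)) (hφ : ∀ i, φ i ∈ P)
    (hsep : ∀ F₁ F₂ : Finset ι, F₁.card + F₂.card ≤ k + 2 →
      (convexHull ℝ (⋃ j ∈ F₁, F j) ∩ convexHull ℝ (⋃ j ∈ F₂, F j)) = ∅ →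
      (convexHull ℝ (φ '' (F₁ : Set ι)) ∩ convexHull ℝ (φ '' (F₂ : Set ι))) = ∅) :
    ∀ F₁ F₂ : Finset ι,
      (convexHull ℝ (⋃ j ∈ F₁, F j) ∩ convexHull ℝ (⋃ j ∈ F₂, F j)) = ∅ →
      (convexHull ℝ (φ '' (F₁ : Set ι)) ∩ convexHull ℝ (φ '' (F₂ : Set ι))) = ∅ := by
  classical
  intro F₁ F₂ hdisj
  by_contra hne
  obtain ⟨x, hx1, hx2⟩ := Set.nonempty_iff_ne_empty.2 hne
  have e1 : φ '' (F₁ : Set ι) = ((F₁.image φ : Finset _) : Set _) := by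
    rw [coe_image]
  have e2 : φ '' (F₂ : Set ι) = ((F₂.image φ : Finset _) : Set _) := by
    rw [coe_image]
  rw [e1] at hx1
  rw [e2] at hx2
  obtain ⟨A', B', hA'sub, hB'sub, hcard, y, hyA, hyB⟩ :=
    kirchberger_aux (F₁.image φ) (F₂.image φ) hx1 hx2
  -- choose preimages
  have hch1 : ∀ a ∈ A', ∃ i, i ∈ F₁ ∧ φ i = a := by
    intro a ha
    simpa [mem_image] using hA'sub ha
  have hch2 : ∀ b ∈ B', ∃ i, i ∈ F₂ ∧ φ i = b := by
    intro b hb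
    simpa [mem_image] using hB'sub hb
  choose g₁ hg₁m hg₁e using hch1
  choose g₂ hg₂m hg₂e using hch2
  set G₁ : Finset ι := A'.attach.image (fun a => g₁ a.1 a.2) with hG₁
  set G₂ : Finset ι := B'.attach.image (fun b => g₂ b.1 b.2) with hG₂
  have hG₁sub : G₁ ⊆ F₁ := by
    intro i hi
    obtain ⟨a, _, rfl⟩ := mem_image.1 hi
    exact hg₁m a.1 a.2
  have hG₂sub : G₂ ⊆ F₂ := by
    intro i hi
    obtain ⟨b, _, rfl⟩ := mem_image.1 hi
    exact hg₂m b.1 b.2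
  have hG₁card : G₁.card ≤ A'.card := by
    calc G₁.card ≤ A'.attach.card := card_image_le
    _ = A'.card := card_attach
  have hG₂card : G₂.card ≤ B'.card := by
    calc G₂.card ≤ B'.attach.card := card_image_le
    _ = B'.card := card_attach
  have hφG₁ : φ '' (G₁ : Set ι) = (A' : Set _) := by
    ext p
    constructor
    · rintro ⟨i, hi, rfl⟩
      obtain ⟨a, _, rfl⟩ := mem_image.1 (mem_coe.1 hi)
      rw [hg₁e a.1 a.2]
      exact mem_coe.2 a.2
    · intro hp
      refine ⟨g₁ p (mem_coe.1 hp), ?_, hg₁e p (mem_coe.1 hp)⟩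
      exact mem_coe.2 (mem_image.2 ⟨⟨p, mem_coe.1 hp⟩, mem_attach _ _, rfl⟩)
  have hφG₂ : φ '' (G₂ : Set ι) = (B' : Set _) := by
    ext p
    constructor
    · rintro ⟨i, hi, rfl⟩
      obtain ⟨b, _, rfl⟩ := mem_image.1 (mem_coe.1 hi)
      rw [hg₂e b.1 b.2]
      exact mem_coe.2 b.2
    · intro hp
      refine ⟨g₂ p (mem_coe.1 hp), ?_, hg₂e p (mem_coe.1 hp)⟩
      exact mem_coe.2 (mem_image.2 ⟨⟨p, mem_coe.1 hp⟩, mem_attach _ _, rfl⟩)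
  have hGdisj : ¬ (convexHull ℝ (⋃ j ∈ G₁, F j) ∩ convexHull ℝ (⋃ j ∈ G₂, F j)) = ∅ := by
    intro hGd
    have := hsep G₁ G₂ (by
      have hfr : Module.finrank ℝ (EuclideanSpace ℝ (Fin k)) = k := finrank_euclideanSpace_fin
      omega) hGd
    rw [hφG₁, hφG₂] at this
    exact Set.eq_empty_iff_forall_notMem.1 this y ⟨hyA, hyB⟩
  obtain ⟨z, hz1, hz2⟩ := Set.nonempty_iff_ne_empty.2 hGdisj
  have hz1' : z ∈ convexHull ℝ (⋃ j ∈ F₁, F j) :=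
    convexHull_mono (Set.biUnion_subset_biUnion_left hG₁sub) hz1
  have hz2' : z ∈ convexHull ℝ (⋃ j ∈ F₂, F j) :=
    convexHull_mono (Set.biUnion_subset_biUnion_left hG₂sub) hz2
  exact Set.eq_empty_iff_forall_notMem.1 hdisj z ⟨hz1', hz2'⟩
end
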